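/- arXiv:2605.21108 — 2 statements merged into one kernel-verified Lean document; each statement's English description precedes it below -/
import Mathlib

section
/- Let W^1, ..., W^N be i.i.d. positive random variables with E[W^1] = L and E[|log W^1|] < ∞. Define L̂^N = (1/N)∑_{n=1}^N W^n. Then E[log L̂^{N+1}] ≥ E[log L̂^N] for all N ≥ 1, i.e., the importance-weighted ELBO is monotonically non-decreasing in the number of samples. -/
open MeasureTheory ProbabilityTheory
open scoped ProbabilityTheory

noncomputable def convPow (μ : Measure ℝ) : ℕ → Measure ℝ
  | 0 => Measure.dirac 0
  | (k+1) => Measure.conv (convPow μ k) μ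

lemma map_sum_eq_convPow {Ω : Type*} [MeasureSpace Ω] [IsProbabilityMeasure (ℙ : Measure Ω)]
    (W : ℕ → Ω → ℝ) (hmeas : ∀ n, Measurable (W n))
    (hindep : iIndepFun W ℙ)
    (hident : ∀ n, IdentDistrib (W n) (W 0) ℙ ℙ) :
    ∀ s : Finset ℕ, (ℙ : Measure Ω).map (fun ω => ∑ i ∈ s, W i ω)
      = convPow ((ℙ : Measure Ω).map (W 0)) s.card := by
  classical
  intro s
  induction s using Finset.induction_on with
  | empty =>
      simp only [Finset.sum_empty, Finset.card_empty, convPow]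
      rw [Measure.map_const]
      simp
  | @insert a t ha ih =>
      have hS : Measurable (fun ω => ∑ i ∈ t, W i ω) :=
        Finset.measurable_sum _ fun i _ => hmeas i
      have hInd : IndepFun (∑ j ∈ t, W j) (W a) ℙ :=
        hindep.indepFun_finset_sum_of_notMem hmeas ha
      have hInd' : IndepFun (fun ω => ∑ j ∈ t, W j ω) (W a) ℙ := by
        have : (∑ j ∈ t, W j) = fun ω => ∑ j ∈ t, W j ω := by
          funext ω; simp [Finset.sum_apply]
        rwa [this] at hInd
      have hprod := (indepFun_iff_map_prod_eq_prod_map_map hS.aemeasurable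
        (hmeas a).aemeasurable).mp hInd'
      have hsum : (fun ω => ∑ i ∈ insert a t, W i ω)
          = (fun p : ℝ × ℝ => p.1 + p.2) ∘ (fun ω => (∑ i ∈ t, W i ω, W a ω)) := by
        funext ω; simp [Finset.sum_insert ha, add_comm]
      rw [hsum, ← Measure.map_map measurable_add (hS.prodMk (hmeas a)), hprod,
        (hident a).map_eq]
      simp [Finset.card_insert_of_notMem ha, convPow, Measure.conv, ih]

lemma identDistrib_sum {Ω : Type*} [MeasureSpace Ω] [IsProbabilityMeasure (ℙ : Measure Ω)]
    (W : ℕ → Ω → ℝ) (hmeas : ∀ n, Measurable (W n))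
    (hindep : iIndepFun W ℙ)
    (hident : ∀ n, IdentDistrib (W n) (W 0) ℙ ℙ)
    {s t : Finset ℕ} (h : s.card = t.card) :
    IdentDistrib (fun ω => ∑ i ∈ s, W i ω) (fun ω => ∑ i ∈ t, W i ω) ℙ ℙ :=
  ⟨(Finset.measurable_sum _ fun i _ => hmeas i).aemeasurable,
   (Finset.measurable_sum _ fun i _ => hmeas i).aemeasurable,
   by rw [map_sum_eq_convPow W hmeas hindep hident s,
          map_sum_eq_convPow W hmeas hindep hident t, h]⟩

lemma integrable_log_mul_sum {Ω : Type*} [MeasureSpace Ω] [IsProbabilityMeasure (ℙ : Measure Ω)]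
    (W : ℕ → Ω → ℝ) (hmeas : ∀ n, Measurable (W n))
    (hpos : ∀ n ω, 0 < W n ω)
    (hintW : ∀ n, Integrable (W n) ℙ)
    (hlogW : ∀ n, Integrable (fun ω => |Real.log (W n ω)|) ℙ)
    (c : ℝ) (hc : 0 < c) (s : Finset ℕ) (hs : s.Nonempty) :
    Integrable (fun ω => Real.log (c * ∑ i ∈ s, W i ω)) ℙ := by
  have hSpos : ∀ ω, 0 < ∑ i ∈ s, W i ω := fun ω =>
    Finset.sum_pos (fun i _ => hpos i ω) hs
  have hgint : Integrable (fun ω => |Real.log c| + ((∑ i ∈ s, W i ω)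
      + ∑ i ∈ s, |Real.log (W i ω)|)) ℙ :=
    (integrable_const _).add ((integrable_finset_sum s fun i _ => hintW i).add
      (integrable_finset_sum s fun i _ => hlogW i))
  refine Integrable.mono' hgint ?_ ?_
  · exact ((Real.measurable_log.comp
      (measurable_const.mul (Finset.measurable_sum _ fun i _ => hmeas i)))).aestronglyMeasurable
  · refine Filter.Eventually.of_forall fun ω => ?_
    obtain ⟨i₀, hi₀⟩ := hs
    have hS := hSpos ω
    rw [Real.norm_eq_abs, Real.log_mul (ne_of_gt hc) (ne_of_gt hS)]
    have h1 : |Real.log c + Real.log (∑ i ∈ s, W i ω)|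
        ≤ |Real.log c| + |Real.log (∑ i ∈ s, W i ω)| := abs_add_le _ _
    have hub : Real.log (∑ i ∈ s, W i ω) ≤ ∑ i ∈ s, W i ω :=
      (Real.log_le_sub_one_of_pos hS).trans (by linarith)
    have hlb : -(∑ i ∈ s, |Real.log (W i ω)|) ≤ Real.log (∑ i ∈ s, W i ω) := by
      have h2 : Real.log (W i₀ ω) ≤ Real.log (∑ i ∈ s, W i ω) :=
        Real.log_le_log (hpos i₀ ω) (Finset.single_le_sum (fun i _ => (hpos i ω).le) hi₀)
      have h3 : |Real.log (W i₀ ω)| ≤ ∑ i ∈ s, |Real.log (W i ω)| :=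
        Finset.single_le_sum (f := fun i => |Real.log (W i ω)|) (fun i _ => abs_nonneg _) hi₀
      have := neg_abs_le (Real.log (W i₀ ω))
      linarith
    have habs : |Real.log (∑ i ∈ s, W i ω)|
        ≤ (∑ i ∈ s, W i ω) + ∑ i ∈ s, |Real.log (W i ω)| := by
      rw [abs_le]
      constructor
      · have : (0:ℝ) ≤ ∑ i ∈ s, W i ω := hS.le
        linarith
      · have : (0:ℝ) ≤ ∑ i ∈ s, |Real.log (W i ω)| :=
          Finset.sum_nonneg fun i _ => abs_nonneg _
        linarith
    linarith


/-- IWAE monotonicity: let `W 0, W 1, …` be i.i.d. positive random variables with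
`E[W 0] = L` and `E[|log W 0|] < ∞`, and define `L̂_N = (1/N) ∑_{n<N} W n`. Then
`E[log L̂_{N+1}] ≥ E[log L̂_N]` for all `N ≥ 1`: the importance-weighted ELBO is
monotonically non-decreasing in the number of samples. -/
theorem stmt_6 {Ω : Type*} [MeasureSpace Ω] [IsProbabilityMeasure (ℙ : Measure Ω)]
    (W : ℕ → Ω → ℝ)
    (hmeas : ∀ n, Measurable (W n))
    (hpos : ∀ n ω, 0 < W n ω)
    (hindep : iIndepFun W ℙ)
    (hident : ∀ n, IdentDistrib (W n) (W 0) ℙ ℙ)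
    (L : ℝ) (hmean : ∫ ω, W 0 ω ∂ℙ = L)
    (hint : Integrable (W 0) ℙ)
    (hlog : Integrable (fun ω => |Real.log (W 0 ω)|) ℙ) :
    ∀ N : ℕ, 1 ≤ N →
      ∫ ω, Real.log ((1 / (N : ℝ)) * ∑ n ∈ Finset.range N, W n ω) ∂ℙ ≤
        ∫ ω, Real.log ((1 / ((N : ℝ) + 1)) * ∑ n ∈ Finset.range (N + 1), W n ω) ∂ℙ := by
  classical
  intro N hN
  have hN0 : (0:ℝ) < N := by exact_mod_cast hN
  have hN1 : (0:ℝ) < (N:ℝ) + 1 := by positivity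
  have hintW : ∀ n, Integrable (W n) ℙ := fun n => (hident n).integrable_iff.mpr hint
  have hlogW : ∀ n, Integrable (fun ω => |Real.log (W n ω)|) ℙ := fun n =>
    (((hident n).comp (Real.measurable_log.abs)).integrable_iff).mpr hlog
  set T : Ω → ℝ := fun ω => ∑ n ∈ Finset.range (N+1), W n ω with hT
  set S : ℕ → Ω → ℝ := fun j ω => ∑ i ∈ (Finset.range (N+1)).erase j, W i ω with hSdef
  have hcard : ∀ j ∈ Finset.range (N+1), ((Finset.range (N+1)).erase j).card = N := by
    intro j hj
    rw [Finset.card_erase_of_mem hj, Finset.card_range]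
    omega
  have hne : ∀ j ∈ Finset.range (N+1), ((Finset.range (N+1)).erase j).Nonempty := by
    intro j hj
    rw [← Finset.card_pos, hcard j hj]; exact hN
  -- integrability
  have hintSj : ∀ j ∈ Finset.range (N+1),
      Integrable (fun ω => Real.log ((1 / (N:ℝ)) * S j ω)) ℙ := fun j hj =>
    integrable_log_mul_sum W hmeas hpos hintW hlogW _ (by positivity) _ (hne j hj)
  have hintT : Integrable (fun ω => Real.log ((1 / ((N:ℝ)+1)) * T ω)) ℙ :=
    integrable_log_mul_sum W hmeas hpos hintW hlogW _ (by positivity) _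
      (Finset.nonempty_range_iff.mpr (Nat.succ_ne_zero N))
  -- identical distribution of each leave-one-out average with the range-N average
  have hID : ∀ j ∈ Finset.range (N+1),
      ∫ ω, Real.log ((1 / (N:ℝ)) * S j ω) ∂ℙ
        = ∫ ω, Real.log ((1 / (N:ℝ)) * ∑ n ∈ Finset.range N, W n ω) ∂ℙ := by
    intro j hj
    have hd := identDistrib_sum W hmeas hindep hident
      (s := (Finset.range (N+1)).erase j) (t := Finset.range N)
      (by rw [hcard j hj, Finset.card_range])
    have hd2 := hd.comp (u := fun x : ℝ => Real.log ((1 / (N:ℝ)) * x))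
      (Real.measurable_log.comp (measurable_const_mul _))
    exact hd2.integral_eq
  -- pointwise Jensen inequality
  have hpt : ∀ ω, ∑ j ∈ Finset.range (N+1), (1/((N:ℝ)+1)) * Real.log ((1 / (N:ℝ)) * S j ω)
      ≤ Real.log ((1 / ((N:ℝ)+1)) * T ω) := by
    intro ω
    have hjen := (strictConcaveOn_log_Ioi.concaveOn).le_map_sum
      (t := Finset.range (N+1)) (w := fun _ => 1/((N:ℝ)+1))
      (p := fun j => (1 / (N:ℝ)) * S j ω)
      (fun i _ => by positivity)
      (by rw [Finset.sum_const, Finset.card_range, nsmul_eq_mul]; push_cast; field_simp)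
      (fun j hj => by
        have : 0 < S j ω := Finset.sum_pos (fun i _ => hpos i ω) (hne j hj)
        exact Set.mem_Ioi.mpr (by positivity))
    have hsum : ∑ j ∈ Finset.range (N+1), (1/((N:ℝ)+1)) • ((1 / (N:ℝ)) * S j ω)
        = (1 / ((N:ℝ)+1)) * T ω := by
      have hSj : ∀ j ∈ Finset.range (N+1), S j ω = T ω - W j ω := by
        intro j hj
        exact Finset.sum_erase_eq_sub hj
      calc ∑ j ∈ Finset.range (N+1), (1/((N:ℝ)+1)) • ((1 / (N:ℝ)) * S j ω)
          = ∑ j ∈ Finset.range (N+1), (1/((N:ℝ)+1)) * ((1 / (N:ℝ)) * (T ω - W j ω)) := by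
            refine Finset.sum_congr rfl fun j hj => ?_
            rw [smul_eq_mul, hSj j hj]
        _ = (1/((N:ℝ)+1)) * ((1 / (N:ℝ)) * ((N+1) * T ω - T ω)) := by
            rw [← Finset.mul_sum, ← Finset.mul_sum, Finset.sum_sub_distrib,
              Finset.sum_const, Finset.card_range, nsmul_eq_mul]
            rw [show (∑ j ∈ Finset.range (N+1), W j ω) = T ω from rfl]
            push_cast
            ring
        _ = (1 / ((N:ℝ)+1)) * T ω := by field_simp; ring
    calc ∑ j ∈ Finset.range (N+1), (1/((N:ℝ)+1)) * Real.log ((1 / (N:ℝ)) * S j ω)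
        = ∑ j ∈ Finset.range (N+1), (1/((N:ℝ)+1)) • Real.log ((1 / (N:ℝ)) * S j ω) := by
          simp [smul_eq_mul]
      _ ≤ Real.log (∑ j ∈ Finset.range (N+1), (1/((N:ℝ)+1)) • ((1 / (N:ℝ)) * S j ω)) := hjen
      _ = Real.log ((1 / ((N:ℝ)+1)) * T ω) := by rw [hsum]
  -- assemble
  have key : ∫ ω, Real.log ((1 / (N:ℝ)) * ∑ n ∈ Finset.range N, W n ω) ∂ℙ
      = ∫ ω, ∑ j ∈ Finset.range (N+1),
          (1/((N:ℝ)+1)) * Real.log ((1 / (N:ℝ)) * S j ω) ∂ℙ := by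
    rw [integral_finset_sum _ (fun j hj => ((hintSj j hj).const_mul _))]
    have : ∀ j ∈ Finset.range (N+1),
        ∫ ω, (1/((N:ℝ)+1)) * Real.log ((1 / (N:ℝ)) * S j ω) ∂ℙ
          = (1/((N:ℝ)+1)) * ∫ ω, Real.log ((1 / (N:ℝ)) * ∑ n ∈ Finset.range N, W n ω) ∂ℙ := by
      intro j hj
      rw [integral_const_mul, hID j hj]
    rw [Finset.sum_congr rfl this, Finset.sum_const, Finset.card_range, nsmul_eq_mul]
    push_cast
    field_simp
  have hfinal : ∫ ω, ∑ j ∈ Finset.range (N+1),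
        (1/((N:ℝ)+1)) * Real.log ((1 / (N:ℝ)) * S j ω) ∂ℙ
      ≤ ∫ ω, Real.log ((1 / ((N:ℝ)+1)) * T ω) ∂ℙ :=
    integral_mono (integrable_finset_sum _ fun j hj => (hintSj j hj).const_mul _)
      hintT hpt
  calc ∫ ω, Real.log ((1 / (N:ℝ)) * ∑ n ∈ Finset.range N, W n ω) ∂ℙ
      = _ := key
    _ ≤ ∫ ω, Real.log ((1 / ((N:ℝ)+1)) * T ω) ∂ℙ := hfinal
end

section
/- Let w^1, ..., w^N be identically distributed positive random variables with E[log w^1] finite, and suppose the collection can be partitioned into G groups of size K (N = GK) such that the variables within each group are mutually independent. Then E[log((1/N)∑_{n=1}^N w^n)] ≥ E[log((1/K)∑ over any single group)], i.e., the log of the full average dominates the log of a K-sample i.i.d. average in expectation. -/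
open MeasureTheory ProbabilityTheory
open scoped ProbabilityTheory

lemma map_tuple_eq_pi {Ω : Type*} [MeasureSpace Ω] [IsProbabilityMeasure (ℙ : Measure Ω)]
    {K : ℕ} (f : Fin K → Ω → ℝ) (hmeas : ∀ k, Measurable (f k))
    (hindep : iIndepFun f ℙ) :
    (ℙ : Measure Ω).map (fun ω k => f k ω) = Measure.pi (fun k => (ℙ : Measure Ω).map (f k)) := by
  refine (Measure.pi_eq fun s hs => ?_).symm
  rw [Measure.map_apply (measurable_pi_lambda _ fun k => hmeas k) (MeasurableSet.univ_pi hs)]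
  have h1 : (fun ω k => f k ω) ⁻¹' (Set.pi Set.univ s) = ⋂ k, f k ⁻¹' s k := by
    ext ω; simp [Set.mem_pi]
  rw [h1, hindep.meas_iInter (fun k => ⟨s k, hs k, rfl⟩)]
  exact Finset.prod_congr rfl fun k _ => (Measure.map_apply (hmeas k) (hs k)).symm

lemma abs_le_abs_add_abs' {x l u : ℝ} (h1 : l ≤ x) (h2 : x ≤ u) : |x| ≤ |l| + |u| :=
  abs_le.2 ⟨by linarith [neg_abs_le l, abs_nonneg u], by linarith [le_abs_self u, abs_nonneg l]⟩

/-- Let `w g k` (group `g ∈ Fin G`, within-group index `k ∈ Fin K`, so `N = G·K` variables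
in total) be identically distributed positive integrable random variables with
`E[log w]` finite, such that within each group the variables are mutually independent.
Then `E[log((1/N) ∑_{g,k} w g k)] ≥ E[log((1/K) ∑_k w g₀ k)]` for any single group `g₀`:
the log of the full average dominates the log of a `K`-sample i.i.d. average in
expectation. -/
theorem stmt_15 {Ω : Type*} [MeasureSpace Ω] [IsProbabilityMeasure (ℙ : Measure Ω)]
    (G K : ℕ) (hG : 0 < G) (hK : 0 < K)
    (w : Fin G → Fin K → Ω → ℝ)
    (hmeas : ∀ g k, Measurable (w g k))
    (hpos : ∀ g k ω, 0 < w g k ω)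
    (hident : ∀ g k g' k', IdentDistrib (w g k) (w g' k') ℙ ℙ)
    (hgrpindep : ∀ g, iIndepFun (w g) ℙ)
    (hint : ∀ g k, Integrable (w g k) ℙ)
    (hlog : ∀ g k, Integrable (fun ω => Real.log (w g k ω)) ℙ) :
    ∀ g₀ : Fin G,
      ∫ ω, Real.log ((1 / (K : ℝ)) * ∑ k, w g₀ k ω) ∂ℙ ≤
        ∫ ω, Real.log ((1 / ((G : ℝ) * (K : ℝ))) * ∑ g, ∑ k, w g k ω) ∂ℙ := by
  intro g₀
  have hGR : (0:ℝ) < G := Nat.cast_pos.2 hG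
  have hKR : (0:ℝ) < K := Nat.cast_pos.2 hK
  set A : Fin G → Ω → ℝ := fun g ω => Real.log ((1 / (K : ℝ)) * ∑ k, w g k ω) with hA
  have hApos : ∀ g ω, (0:ℝ) < (1 / (K : ℝ)) * ∑ k, w g k ω := by
    intro g ω
    have : (0:ℝ) < ∑ k, w g k ω :=
      Finset.sum_pos (fun k _ => hpos g k ω) (Finset.univ_nonempty_iff.2 ⟨⟨0, hK⟩⟩)
    positivity
  -- identical distribution of log-group-averages
  have hid : ∀ g, IdentDistrib (A g) (A g₀) ℙ ℙ := by
    intro g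
    have hφ : Measurable (fun v : Fin K → ℝ => Real.log ((1 / (K : ℝ)) * ∑ k, v k)) := by
      apply Real.measurable_log.comp
      exact measurable_const.mul (Finset.measurable_sum _ fun k _ => measurable_pi_apply k)
    have htup : IdentDistrib (fun ω k => w g k ω) (fun ω k => w g₀ k ω) ℙ ℙ := by
      refine ⟨(measurable_pi_lambda _ fun k => hmeas g k).aemeasurable,
        (measurable_pi_lambda _ fun k => hmeas g₀ k).aemeasurable, ?_⟩
      rw [map_tuple_eq_pi _ (hmeas g) (hgrpindep g),
        map_tuple_eq_pi _ (hmeas g₀) (hgrpindep g₀)]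
      congr 1
      funext k
      exact (hident g k g₀ k).map_eq
    exact htup.comp hφ
  -- integrability of the log of averages
  have hintA : ∀ g, Integrable (A g) ℙ := by
    intro g
    have hAm : Measurable (A g) :=
      Real.measurable_log.comp
        (measurable_const.mul (Finset.measurable_sum _ fun k _ => hmeas g k))
    set L : Ω → ℝ := fun ω => Real.log (1 / (K : ℝ)) + Real.log (w g ⟨0, hK⟩ ω) with hL
    set U : Ω → ℝ := fun ω => (1 / (K : ℝ)) * ∑ k, w g k ω with hU
    have hLint : Integrable L ℙ := (integrable_const _).add (hlog g ⟨0, hK⟩)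
    have hUint : Integrable U ℙ := (integrable_finset_sum _ fun k _ => hint g k).const_mul _
    refine ((hLint.abs.add hUint.abs).mono' hAm.aestronglyMeasurable ?_)
    filter_upwards with ω
    have hsumpos : (0:ℝ) < ∑ k, w g k ω :=
      Finset.sum_pos (fun k _ => hpos g k ω) (Finset.univ_nonempty_iff.2 ⟨⟨0, hK⟩⟩)
    have hle1 : A g ω ≤ U ω := by
      have h := Real.log_le_sub_one_of_pos (hApos g ω)
      simp only [hA, hU]; linarith
    have hle2 : L ω ≤ A g ω := by
      have h1 : w g ⟨0, hK⟩ ω ≤ ∑ k, w g k ω :=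
        Finset.single_le_sum (fun k _ => (hpos g k ω).le) (Finset.mem_univ _)
      have h2 : Real.log (w g ⟨0, hK⟩ ω) ≤ Real.log (∑ k, w g k ω) :=
        Real.log_le_log (hpos g ⟨0, hK⟩ ω) h1
      have h3 : A g ω = Real.log (1 / (K : ℝ)) + Real.log (∑ k, w g k ω) := by
        rw [hA]; exact Real.log_mul (by positivity) hsumpos.ne'
      rw [hL, h3]; linarith
    rw [Real.norm_eq_abs]
    exact abs_le_abs_add_abs' hle2 hle1
  -- pointwise Jensen over groups
  have hjensen : ∀ ω, (1 / (G:ℝ)) * ∑ g, A g ω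
      ≤ Real.log ((1 / ((G : ℝ) * (K : ℝ))) * ∑ g, ∑ k, w g k ω) := by
    intro ω
    have h := (strictConcaveOn_log_Ioi.concaveOn).le_map_sum (t := Finset.univ)
      (w := fun _ : Fin G => 1 / (G:ℝ)) (p := fun g => (1 / (K : ℝ)) * ∑ k, w g k ω)
      (fun _ _ => by positivity)
      (by simp [Finset.card_univ]; field_simp)
      (fun g _ => hApos g ω)
    have hlhs : ∑ g : Fin G, (1 / (G:ℝ)) • Real.log ((1 / (K : ℝ)) * ∑ k, w g k ω)
        = (1 / (G:ℝ)) * ∑ g, A g ω := by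
      rw [Finset.mul_sum]; exact Finset.sum_congr rfl fun g _ => by rw [smul_eq_mul]
    have hrhs : ∑ g : Fin G, (1 / (G:ℝ)) • ((1 / (K : ℝ)) * ∑ k, w g k ω)
        = (1 / ((G : ℝ) * (K : ℝ))) * ∑ g, ∑ k, w g k ω := by
      rw [Finset.mul_sum]
      exact Finset.sum_congr rfl fun g _ => by rw [smul_eq_mul]; field_simp
    rw [hlhs, hrhs] at h
    exact h
  -- combine
  have hsum : ∑ g : Fin G, ∫ ω, A g ω ∂ℙ = (G:ℝ) * ∫ ω, A g₀ ω ∂ℙ := by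
    rw [Finset.sum_congr rfl fun g _ => (hid g).integral_eq]
    simp [Finset.card_univ, nsmul_eq_mul]
  have key : ∫ ω, A g₀ ω ∂ℙ = ∫ ω, (1 / (G:ℝ)) * ∑ g, A g ω ∂ℙ := by
    rw [integral_const_mul, integral_finset_sum _ fun g _ => hintA g, hsum]
    field_simp
  calc ∫ ω, A g₀ ω ∂ℙ = ∫ ω, (1 / (G:ℝ)) * ∑ g, A g ω ∂ℙ := key
    _ ≤ ∫ ω, Real.log ((1 / ((G : ℝ) * (K : ℝ))) * ∑ g, ∑ k, w g k ω) ∂ℙ := by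
        refine integral_mono ((integrable_finset_sum _ fun g _ => hintA g).const_mul _) ?_ hjensen
        · -- integrability of the big log
          have hAm : Measurable (fun ω => Real.log ((1 / ((G : ℝ) * (K : ℝ))) * ∑ g, ∑ k, w g k ω)) :=
            Real.measurable_log.comp (measurable_const.mul
              (Finset.measurable_sum _ fun g _ => Finset.measurable_sum _ fun k _ => hmeas g k))
          set L : Ω → ℝ := fun ω => Real.log (1 / ((G:ℝ)*(K:ℝ))) + Real.log (w g₀ ⟨0, hK⟩ ω) with hL
          set U : Ω → ℝ := fun ω => (1 / ((G:ℝ)*(K:ℝ))) * ∑ g, ∑ k, w g k ω with hU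
          have hLint : Integrable L ℙ := (integrable_const _).add (hlog g₀ ⟨0, hK⟩)
          have hUint : Integrable U ℙ :=
            (integrable_finset_sum _ fun g _ => integrable_finset_sum _ fun k _ => hint g k).const_mul _
          refine ((hLint.abs.add hUint.abs).mono' hAm.aestronglyMeasurable ?_)
          filter_upwards with ω
          have hsumpos : (0:ℝ) < ∑ g, ∑ k, w g k ω :=
            Finset.sum_pos (fun g _ => Finset.sum_pos (fun k _ => hpos g k ω)
              (Finset.univ_nonempty_iff.2 ⟨⟨0, hK⟩⟩)) (Finset.univ_nonempty_iff.2 ⟨⟨0, hG⟩⟩)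
          have hbpos : (0:ℝ) < (1 / ((G:ℝ)*(K:ℝ))) * ∑ g, ∑ k, w g k ω := by positivity
          have hle1 : Real.log ((1 / ((G:ℝ)*(K:ℝ))) * ∑ g, ∑ k, w g k ω) ≤ U ω := by
            have := Real.log_le_sub_one_of_pos hbpos
            rw [hU]; linarith
          have hle2 : L ω ≤ Real.log ((1 / ((G:ℝ)*(K:ℝ))) * ∑ g, ∑ k, w g k ω) := by
            have h1 : w g₀ ⟨0, hK⟩ ω ≤ ∑ g, ∑ k, w g k ω := by
              calc w g₀ ⟨0, hK⟩ ω ≤ ∑ k, w g₀ k ω :=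
                    Finset.single_le_sum (fun k _ => (hpos g₀ k ω).le) (Finset.mem_univ _)
                _ ≤ ∑ g, ∑ k, w g k ω :=
                    Finset.single_le_sum (f := fun g => ∑ k, w g k ω)
                      (fun g _ => Finset.sum_nonneg fun k _ => (hpos g k ω).le) (Finset.mem_univ _)
            have h2 : Real.log (w g₀ ⟨0, hK⟩ ω) ≤ Real.log (∑ g, ∑ k, w g k ω) :=
              Real.log_le_log (hpos g₀ ⟨0, hK⟩ ω) h1
            have h3 : Real.log ((1 / ((G:ℝ)*(K:ℝ))) * ∑ g, ∑ k, w g k ω)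
                = Real.log (1 / ((G:ℝ)*(K:ℝ))) + Real.log (∑ g, ∑ k, w g k ω) :=
              Real.log_mul (by positivity) hsumpos.ne'
            rw [hL, h3]; linarith
          rw [Real.norm_eq_abs]
          exact abs_le_abs_add_abs' hle2 hle1
end
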